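/- For R = {ba → ac, cc → bc}, the set RFC(R) of right-hand sides of forward closures equals (a+b)b*c, and since this language contains no R-redex, R is terminating on RFC(R). -/
import Mathlib

inductive ABC where
  | a : ABC
  | b : ABC
  | c : ABC
deriving DecidableEq

def Step {Γ : Type*} (R : Set (List Γ × List Γ)) (u v : List Γ) : Prop :=
  ∃ (x y l r : List Γ), (l, r) ∈ R ∧ u = x ++ l ++ y ∧ v = x ++ r ++ y

def SNOn {Γ : Type*} (R : Set (List Γ × List Γ)) (L : Set (List Γ)) : Prop :=
  ¬ ∃ f : ℕ → List Γ, f 0 ∈ L ∧ ∀ n, Step R (f n) (f (n + 1))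

/-- Right-hand sides of forward closures of `R`. -/
inductive RFC {Γ : Type*} (R : Set (List Γ × List Γ)) : List Γ → Prop where
  | base {l r : List Γ} : (l, r) ∈ R → RFC R r
  | inner {x y l r : List Γ} : RFC R (x ++ l ++ y) → (l, r) ∈ R → RFC R (x ++ r ++ y)
  | eat {x l₁ l₂ r : List Γ} : RFC R (x ++ l₁) → (l₁ ++ l₂, r) ∈ R →
      l₁ ≠ [] → l₂ ≠ [] → RFC R (x ++ r)

open ABC in
/-- `R = {ba → ac, cc → bc}`. -/
def R9 : Set (List ABC × List ABC) :=
  {([b, a], [a, c]), ([c, c], [b, c])}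

open ABC

def Lang (w : List ABC) : Prop :=
  ∃ (x : ABC) (n : ℕ), (x = a ∨ x = b) ∧ w = x :: (List.replicate n b ++ [c])

lemma lang_count_c {w : List ABC} (h : Lang w) : w.count c = 1 := by
  obtain ⟨x, n, hx, rfl⟩ := h
  rcases hx with rfl | rfl <;> simp [List.count_cons, List.count_replicate]

lemma lang_tail_no_a {w : List ABC} (h : Lang w) : a ∉ w.tail := by
  obtain ⟨x, n, hx, rfl⟩ := h
  simp [List.mem_replicate]

lemma lang_no_redex {w : List ABC} (h : Lang w) :
    ∀ x y l r, (l, r) ∈ R9 → w ≠ x ++ l ++ y := by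
  rintro x y l r hlr rfl
  simp only [R9, Set.mem_insert_iff, Set.mem_singleton_iff, Prod.mk.injEq] at hlr
  rcases hlr with ⟨rfl, rfl⟩ | ⟨rfl, rfl⟩
  · -- l = [b,a]
    have := lang_tail_no_a h
    rcases x with _ | ⟨u, x⟩ <;> simp at this
  · have := lang_count_c h
    simp [List.count_append, List.count_cons] at this
    omega

lemma lang_rfc {w : List ABC} (h : RFC R9 w) : Lang w := by
  induction h with
  | base hr =>
    simp only [R9, Set.mem_insert_iff, Set.mem_singleton_iff, Prod.mk.injEq] at hr
    rcases hr with ⟨rfl, rfl⟩ | ⟨rfl, rfl⟩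
    · exact ⟨a, 0, Or.inl rfl, rfl⟩
    · exact ⟨b, 0, Or.inr rfl, rfl⟩
  | inner _ hr ih => exact absurd rfl (lang_no_redex ih _ _ _ _ hr)
  | @eat x l₁ l₂ r _ hr h1 h2 ih =>
    simp only [R9, Set.mem_insert_iff, Set.mem_singleton_iff, Prod.mk.injEq] at hr
    rcases hr with ⟨he, rfl⟩ | ⟨he, rfl⟩
    · -- l₁ ++ l₂ = [b,a]; both nonempty, so l₁ = [b]
      have hl : l₁ = [b] := by
        rcases l₁ with _ | ⟨u, (_ | ⟨v, t⟩)⟩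
        · exact absurd rfl h1
        · simpa using congrArg (·.head?) he
        · exfalso
          have := congrArg List.length he
          simp at this
          obtain ⟨rfl, rfl⟩ := this
          simp at h2
      subst hl
      -- x ++ [b] ∈ Lang: impossible, last letter is c
      obtain ⟨x0, n, hx, hw⟩ := ih
      have : (x ++ [b]).getLast (by simp) = (x0 :: (List.replicate n b ++ [c])).getLast (by simp) := by
        congr 1
      simp [List.getLast_append] at this
    · -- l₁ ++ l₂ = [c,c]; l₁ = [c], r = [b,c]
      have hl : l₁ = [c] := by
        rcases l₁ with _ | ⟨u, (_ | ⟨v, t⟩)⟩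
        · exact absurd rfl h1
        · simpa using congrArg (·.head?) he
        · exfalso
          have := congrArg List.length he
          simp at this
          obtain ⟨rfl, rfl⟩ := this
          simp at h2
      subst hl
      obtain ⟨x0, n, hx, hw⟩ := ih
      have hx' : x = x0 :: List.replicate n b := by
        have h4 : (x ++ [c]).dropLast = ((x0 :: List.replicate n b) ++ [c]).dropLast := by
          rw [hw]; rfl
        simp only [List.dropLast_concat] at h4
        exact h4
      subst hx'
      exact ⟨x0, n + 1, hx, by simp [List.replicate_succ']⟩

lemma rfc_lang {w : List ABC} (h : Lang w) : RFC R9 w := by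
  obtain ⟨x0, n, hx, rfl⟩ := h
  induction n with
  | zero =>
    rcases hx with rfl | rfl
    · exact RFC.base (show ([b,a],[a,c]) ∈ R9 by left; rfl)
    · exact RFC.base (show ([c,c],[b,c]) ∈ R9 by right; rfl)
  | succ n ih =>
    have h1 : RFC R9 ((x0 :: List.replicate n b) ++ [c]) := by simpa using ih
    have := RFC.eat (x := x0 :: List.replicate n b) (l₁ := [c]) (l₂ := [c]) (r := [b,c])
      h1 (by right; rfl) (by simp) (by simp)
    simpa [List.replicate_succ'] using this

open ABC in
/-- `RFC(R) = (a+b)b*c`, and `R` is terminating on `RFC(R)`. -/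
theorem rfc_R9 :
    (∀ w : List ABC, RFC R9 w ↔
      ∃ (x : ABC) (n : ℕ), (x = a ∨ x = b) ∧ w = x :: (List.replicate n b ++ [c])) ∧
    SNOn R9 { w | RFC R9 w } := by
  constructor
  · exact fun w => ⟨lang_rfc, rfc_lang⟩
  · rintro ⟨f, h0, hs⟩
    obtain ⟨x, y, l, r, hlr, hu, _⟩ := hs 0
    exact lang_no_redex (lang_rfc h0) x y l r hlr hu
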